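/- Let ξ₀ ≠ 0 and let (x, ξ) : (−δ, δ) → ℝ² be a continuous curve with x(0) = 0, ξ(0) = ξ₀, which is C¹ and satisfies ẋ(t) = ξ(t), ξ̇(t) = −sign(x(t)) at every t with x(t) ≠ 0, and such that {t : x(t) = 0} has empty interior. Then any two such curves with the same initial condition (0, ξ₀) coincide on a neighborhood of t = 0, i.e. there exists δ' > 0 such that on (−δ', δ') the curve is uniquely determined. -/

import Mathlib

lemma const_of_deriv_zero {a b : ℝ} (g : ℝ → ℝ)
    (hg : ∀ t ∈ Set.Ioo a b, HasDerivAt g 0 t) :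
    ∀ s ∈ Set.Ioo a b, ∀ t ∈ Set.Ioo a b, g s = g t := by
  intro s hs t ht
  have := (convex_Ioo a b).norm_image_sub_le_of_norm_hasDerivWithin_le
    (f' := fun _ => (0:ℝ)) (C := 0) (fun u hu => (hg u hu).hasDerivWithinAt)
    (fun u _ => by simp) hs ht
  rw [zero_mul] at this
  have := norm_le_zero_iff.mp this
  linarith [sub_eq_zero.mp this]

lemma const_val {p : ℝ} (s : Set ℝ) (hs : p ∈ closure s) (g : ℝ → ℝ) (c : ℝ)
    (hgc : ∀ t ∈ s, g t = c) (hcont : ContinuousAt g p) : g p = c := by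
  have hne : (nhdsWithin p s).NeBot := mem_closure_iff_nhdsWithin_neBot.mp hs
  have h1 : Filter.Tendsto g (nhdsWithin p s) (nhds (g p)) :=
    hcont.continuousWithinAt.tendsto
  have h2 : Filter.Tendsto g (nhdsWithin p s) (nhds c) := by
    apply Filter.Tendsto.congr' _ tendsto_const_nhds
    filter_upwards [self_mem_nhdsWithin] with u hu using (hgc u hu).symm
  exact tendsto_nhds_unique h1 h2

lemma key (ξ₀ : ℝ) (hξ₀ : 0 < ξ₀) (δ : ℝ) (hδ : 0 < δ) (x ξ : ℝ → ℝ)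
    (hcx : ContinuousOn x (Set.Ioo (-δ) δ)) (hcξ : ContinuousOn ξ (Set.Ioo (-δ) δ))
    (h0 : x 0 = 0) (h0' : ξ 0 = ξ₀)
    (hode : ∀ t ∈ Set.Ioo (-δ) δ, x t ≠ 0 →
      HasDerivAt x (ξ t) t ∧ HasDerivAt ξ (-Real.sign (x t)) t)
    (hz : interior {t | t ∈ Set.Ioo (-δ) δ ∧ x t = 0} = ∅) :
    ∃ δ' > 0, ∀ t ∈ Set.Ioo (-δ') δ',
      x t = ξ₀ * t - Real.sign t * t ^ 2 / 2 ∧ ξ t = ξ₀ - Real.sign t * t := by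
  have h0mem : (0:ℝ) ∈ Set.Ioo (-δ) δ := ⟨by linarith, hδ⟩
  have hOo : Set.Ioo (-δ) δ ∈ nhds (0:ℝ) := Ioo_mem_nhds (by linarith) hδ
  have hcat : ∀ p ∈ Set.Ioo (-δ) δ, ContinuousAt ξ p ∧ ContinuousAt x p := by
    intro p hp
    have hp' : Set.Ioo (-δ) δ ∈ nhds p := Ioo_mem_nhds hp.1 hp.2
    exact ⟨hcξ.continuousAt hp', hcx.continuousAt hp'⟩
  -- find δ₁ small with ξ > ξ₀/2 on Ioo (-δ₁) δ₁ ⊆ Ioo (-δ) δ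
  have hev : ∀ᶠ t in nhds (0:ℝ), ξ₀ / 2 < ξ t ∧ t ∈ Set.Ioo (-δ) δ := by
    have h1 : ∀ᶠ t in nhds (0:ℝ), ξ₀ / 2 < ξ t := by
      have := (hcat 0 h0mem).1
      have h2 : ∀ᶠ y in nhds (ξ 0), ξ₀ / 2 < y := by
        rw [h0']; exact eventually_gt_nhds (by linarith)
      exact this.eventually h2
    exact h1.and hOo
  obtain ⟨δ₁, hδ₁, hball⟩ := Metric.eventually_nhds_iff.mp hev
  have hmem : ∀ t ∈ Set.Ioo (-δ₁) δ₁, ξ₀ / 2 < ξ t ∧ t ∈ Set.Ioo (-δ) δ := by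
    intro t ht
    apply hball
    rw [Real.dist_eq, sub_zero, abs_lt]
    exact ⟨ht.1, ht.2⟩
  have hsubI : Set.Ioo (-δ₁) δ₁ ⊆ Set.Ioo (-δ) δ := fun t ht => (hmem t ht).2
  -- monotonicity on zero-free closed subintervals
  have hmono : ∀ a b : ℝ, a < b → Set.Icc a b ⊆ Set.Ioo (-δ₁) δ₁ →
      (∀ t ∈ Set.Ioo a b, x t ≠ 0) → x a < x b := by
    intro a b hab hsub hne
    have hsm : StrictMonoOn x (Set.Icc a b) := by
      apply strictMonoOn_of_deriv_pos (convex_Icc a b) (hcx.mono (hsub.trans hsubI))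
      intro t ht
      rw [interior_Icc] at ht
      have hxne := hne t ht
      have hd := (hode t (hsubI (hsub (Set.Ioo_subset_Icc_self ht))) hxne).1
      rw [hd.deriv]
      have := (hmem t (hsub (Set.Ioo_subset_Icc_self ht))).1
      linarith
    exact hsm (Set.left_mem_Icc.mpr hab.le) (Set.right_mem_Icc.mpr hab.le) hab
  -- no two zeros
  have hzero : ∀ p q : ℝ, p < q → Set.Icc p q ⊆ Set.Ioo (-δ₁) δ₁ →
      x p = 0 → x q = 0 → False := by
    intro p q hpq hsub hxp hxq
    have hu : ∃ u ∈ Set.Ioo p q, x u ≠ 0 := by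
      by_contra h
      push_neg at h
      have hsub2 : Set.Ioo p q ⊆ interior {t | t ∈ Set.Ioo (-δ) δ ∧ x t = 0} := by
        apply interior_maximal _ isOpen_Ioo
        intro t ht
        exact ⟨hsubI (hsub (Set.Ioo_subset_Icc_self ht)), h t ht⟩
      rw [hz] at hsub2
      exact hsub2 (Set.nonempty_Ioo.mpr hpq).choose_spec
    obtain ⟨u, hu, hxu⟩ := hu
    set Z₁ := {v ∈ Set.Icc p u | x v = 0} with hZ₁def
    have hZ₁ne : Z₁.Nonempty := ⟨p, ⟨le_refl p, hu.1.le⟩, hxp⟩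
    have hZ₁bdd : BddAbove Z₁ := ⟨u, fun v hv => hv.1.2⟩
    set a := sSup Z₁ with hadef
    have hap : p ≤ a := le_csSup hZ₁bdd ⟨⟨le_refl p, hu.1.le⟩, hxp⟩
    have hau : a ≤ u := csSup_le hZ₁ne (fun v hv => hv.1.2)
    have haI : a ∈ Set.Ioo (-δ) δ := hsubI (hsub ⟨hap.trans' (le_refl p), hau.trans hu.2.le⟩)
    have hxa : x a = 0 := by
      have hacl : a ∈ closure Z₁ := csSup_mem_closure hZ₁ne hZ₁bdd
      have hca : ContinuousWithinAt x Z₁ a := ((hcat a haI).2).continuousWithinAt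
      have himg := hca.mem_closure_image hacl
      have : closure (x '' Z₁) ⊆ {0} := by
        apply closure_minimal _ isClosed_singleton
        rintro _ ⟨v, hv, rfl⟩
        exact hv.2
      exact this himg
    have halt : a < u := lt_of_le_of_ne hau (fun h => hxu (h ▸ hxa))
    set Z₂ := {v ∈ Set.Icc u q | x v = 0} with hZ₂def
    have hZ₂ne : Z₂.Nonempty := ⟨q, ⟨hu.2.le, le_refl q⟩, hxq⟩
    have hZ₂bdd : BddBelow Z₂ := ⟨u, fun v hv => hv.1.1⟩
    set b := sInf Z₂ with hbdef
    have hub : u ≤ b := le_csInf hZ₂ne (fun v hv => hv.1.1)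
    have hbq : b ≤ q := csInf_le hZ₂bdd ⟨⟨hu.2.le, le_refl q⟩, hxq⟩
    have hbI : b ∈ Set.Ioo (-δ) δ := hsubI (hsub ⟨hu.1.le.trans hub, hbq⟩)
    have hxb : x b = 0 := by
      have hbcl : b ∈ closure Z₂ := csInf_mem_closure hZ₂ne hZ₂bdd
      have hcb : ContinuousWithinAt x Z₂ b := ((hcat b hbI).2).continuousWithinAt
      have himg := hcb.mem_closure_image hbcl
      have : closure (x '' Z₂) ⊆ {0} := by
        apply closure_minimal _ isClosed_singleton
        rintro _ ⟨v, hv, rfl⟩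
        exact hv.2
      exact this himg
    have hultb : u < b := lt_of_le_of_ne hub (fun h => hxu (h ▸ hxb.symm ▸ rfl))
    have hne : ∀ t ∈ Set.Ioo a b, x t ≠ 0 := by
      intro t ht hxt
      rcases le_or_gt t u with h | h
      · have : t ∈ Z₁ := ⟨⟨hap.trans ht.1.le, h⟩, hxt⟩
        exact absurd (le_csSup hZ₁bdd this) (not_le.mpr ht.1)
      · have : t ∈ Z₂ := ⟨⟨h.le, ht.2.le.trans hbq⟩, hxt⟩
        exact absurd (csInf_le hZ₂bdd this) (not_le.mpr ht.2)
    have := hmono a b (halt.trans hultb) (fun t ht => hsub ⟨hap.trans ht.1, ht.2.trans hbq⟩) hne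
    rw [hxa, hxb] at this
    exact lt_irrefl 0 this
  -- nonvanishing away from 0
  have hxne : ∀ t ∈ Set.Ioo (-δ₁) δ₁, t ≠ 0 → x t ≠ 0 := by
    intro t ht ht0 hxt
    have h0m : (0:ℝ) ∈ Set.Ioo (-δ₁) δ₁ := ⟨by linarith, hδ₁⟩
    rcases ht0.lt_or_gt with h | h
    · exact hzero t 0 h (fun s hs => ⟨lt_of_lt_of_le ht.1 hs.1, lt_of_le_of_lt hs.2 h0m.2⟩) hxt h0
    · exact hzero 0 t h (fun s hs => ⟨lt_of_lt_of_le h0m.1 hs.1, lt_of_le_of_lt hs.2 ht.2⟩) h0 hxt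
  have h0m : (0:ℝ) ∈ Set.Ioo (-δ₁) δ₁ := ⟨by linarith, hδ₁⟩
  -- sign of x
  have hxpos : ∀ t ∈ Set.Ioo 0 δ₁, 0 < x t := by
    intro t ht
    have := hmono 0 t ht.1
      (fun s hs => ⟨lt_of_lt_of_le h0m.1 hs.1, lt_of_le_of_lt hs.2 ht.2⟩)
      (fun s hs => hxne s ⟨lt_trans h0m.1 hs.1, hs.2.trans ht.2⟩ (ne_of_gt hs.1))
    rwa [h0] at this
  have hxneg : ∀ t ∈ Set.Ioo (-δ₁) 0, x t < 0 := by
    intro t ht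
    have := hmono t 0 ht.2
      (fun s hs => ⟨lt_of_lt_of_le ht.1 hs.1, lt_of_le_of_lt hs.2 h0m.2⟩)
      (fun s hs => hxne s ⟨ht.1.trans hs.1, hs.2.trans h0m.2⟩ (ne_of_lt hs.2))
    rwa [h0] at this
  -- derivatives on positive side
  have hdpos : ∀ t ∈ Set.Ioo 0 δ₁, HasDerivAt x (ξ t) t ∧ HasDerivAt ξ (-1) t := by
    intro t ht
    have htI : t ∈ Set.Ioo (-δ₁) δ₁ := ⟨lt_trans h0m.1 ht.1, ht.2⟩
    have hx := hxpos t ht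
    have := hode t (hsubI htI) (ne_of_gt hx)
    rw [Real.sign_of_pos hx] at this
    exact this
  have hdneg : ∀ t ∈ Set.Ioo (-δ₁) 0, HasDerivAt x (ξ t) t ∧ HasDerivAt ξ 1 t := by
    intro t ht
    have htI : t ∈ Set.Ioo (-δ₁) δ₁ := ⟨ht.1, lt_trans ht.2 h0m.2⟩
    have hx := hxneg t ht
    have := hode t (hsubI htI) (ne_of_lt hx)
    rw [Real.sign_of_neg hx] at this
    simpa using this
  have hcl0p : (0:ℝ) ∈ closure (Set.Ioo 0 δ₁) := by
    rw [closure_Ioo (ne_of_lt hδ₁)]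
    exact ⟨le_refl 0, hδ₁.le⟩
  have hcl0n : (0:ℝ) ∈ closure (Set.Ioo (-δ₁) 0) := by
    rw [closure_Ioo (by linarith : -δ₁ ≠ 0)]
    exact ⟨by linarith, le_refl 0⟩
  -- ξ formula, positive side
  have hξp : ∀ t ∈ Set.Ioo 0 δ₁, ξ t = ξ₀ - t := by
    intro t ht
    have hder : ∀ s ∈ Set.Ioo 0 δ₁, HasDerivAt (fun u => ξ u + u) 0 s := by
      intro s hs
      have h := (hdpos s hs).2.add (hasDerivAt_id s); simp at h; exact h
    have hconst := const_of_deriv_zero _ hder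
    have := const_val (Set.Ioo 0 δ₁) hcl0p (fun u => ξ u + u) (ξ t + t)
      (fun s hs => hconst s hs t ht) (((hcat 0 h0mem).1).add continuousAt_id)
    simp only [add_zero] at this
    rw [h0'] at this
    linarith
  have hξn : ∀ t ∈ Set.Ioo (-δ₁) 0, ξ t = ξ₀ + t := by
    intro t ht
    have hder : ∀ s ∈ Set.Ioo (-δ₁) 0, HasDerivAt (fun u => ξ u - u) 0 s := by
      intro s hs
      have h := (hdneg s hs).2.sub (hasDerivAt_id s); simp at h; exact h
    have hconst := const_of_deriv_zero _ hder
    have := const_val (Set.Ioo (-δ₁) 0) hcl0n (fun u => ξ u - u) (ξ t - t)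
      (fun s hs => hconst s hs t ht) (((hcat 0 h0mem).1).sub continuousAt_id)
    simp only [sub_zero] at this
    rw [h0'] at this
    linarith
  -- x formula, positive side
  have hxp : ∀ t ∈ Set.Ioo 0 δ₁, x t = ξ₀ * t - t ^ 2 / 2 := by
    intro t ht
    have hder : ∀ s ∈ Set.Ioo 0 δ₁, HasDerivAt (fun u => x u - (ξ₀ * u - u ^ 2 / 2)) 0 s := by
      intro s hs
      have h1 : HasDerivAt (fun u : ℝ => ξ₀ * u - u ^ 2 / 2) (ξ₀ - s) s := by
        have ha : HasDerivAt (fun u : ℝ => ξ₀ * u) ξ₀ s := by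
          simpa using (hasDerivAt_id s).const_mul ξ₀
        have hb : HasDerivAt (fun u : ℝ => u ^ 2 / 2) s s := by
          have := (hasDerivAt_pow 2 s).div_const 2
          refine this.congr_deriv ?_
          push_cast
          ring
        exact ha.sub hb
      have h2 := (hdpos s hs).1.sub h1
      rw [hξp s hs] at h2
      simp at h2; exact h2
    have hconst := const_of_deriv_zero _ hder
    have := const_val (Set.Ioo 0 δ₁) hcl0p (fun u => x u - (ξ₀ * u - u ^ 2 / 2))
      (x t - (ξ₀ * t - t ^ 2 / 2)) (fun s hs => hconst s hs t ht)
      (((hcat 0 h0mem).2).sub (by fun_prop))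
    norm_num [h0] at this
    linarith
  have hxn : ∀ t ∈ Set.Ioo (-δ₁) 0, x t = ξ₀ * t + t ^ 2 / 2 := by
    intro t ht
    have hder : ∀ s ∈ Set.Ioo (-δ₁) 0, HasDerivAt (fun u => x u - (ξ₀ * u + u ^ 2 / 2)) 0 s := by
      intro s hs
      have h1 : HasDerivAt (fun u : ℝ => ξ₀ * u + u ^ 2 / 2) (ξ₀ + s) s := by
        have ha : HasDerivAt (fun u : ℝ => ξ₀ * u) ξ₀ s := by
          simpa using (hasDerivAt_id s).const_mul ξ₀
        have hb : HasDerivAt (fun u : ℝ => u ^ 2 / 2) s s := by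
          have := (hasDerivAt_pow 2 s).div_const 2
          refine this.congr_deriv ?_
          push_cast
          ring
        exact ha.add hb
      have h2 := (hdneg s hs).1.sub h1
      rw [hξn s hs] at h2
      simp at h2; exact h2
    have hconst := const_of_deriv_zero _ hder
    have := const_val (Set.Ioo (-δ₁) 0) hcl0n (fun u => x u - (ξ₀ * u + u ^ 2 / 2))
      (x t - (ξ₀ * t + t ^ 2 / 2)) (fun s hs => hconst s hs t ht)
      (((hcat 0 h0mem).2).sub (by fun_prop))
    norm_num [h0] at this
    linarith
  -- conclude
  refine ⟨δ₁, hδ₁, fun t ht => ?_⟩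
  rcases lt_trichotomy t 0 with h | h | h
  · rw [Real.sign_of_neg h, hxn t ⟨ht.1, h⟩, hξn t ⟨ht.1, h⟩]
    constructor <;> ring
  · subst h
    rw [Real.sign_zero, h0, h0']
    constructor <;> ring
  · rw [Real.sign_of_pos h, hxp t ⟨h, ht.2⟩, hξp t ⟨h, ht.2⟩]
    constructor <;> ring

lemma key' (ξ₀ : ℝ) (hξ₀ : ξ₀ ≠ 0) (δ : ℝ) (hδ : 0 < δ) (x ξ : ℝ → ℝ)
    (hcx : ContinuousOn x (Set.Ioo (-δ) δ)) (hcξ : ContinuousOn ξ (Set.Ioo (-δ) δ))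
    (h0 : x 0 = 0) (h0' : ξ 0 = ξ₀)
    (hode : ∀ t ∈ Set.Ioo (-δ) δ, x t ≠ 0 →
      HasDerivAt x (ξ t) t ∧ HasDerivAt ξ (-Real.sign (x t)) t)
    (hz : interior {t | t ∈ Set.Ioo (-δ) δ ∧ x t = 0} = ∅) :
    ∃ δ' > 0, ∀ t ∈ Set.Ioo (-δ') δ',
      x t = ξ₀ * t - Real.sign ξ₀ * Real.sign t * t ^ 2 / 2 ∧
      ξ t = ξ₀ - Real.sign ξ₀ * Real.sign t * t := by
  rcases hξ₀.lt_or_gt with hneg | hpos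
  · have hz' : interior {t | t ∈ Set.Ioo (-δ) δ ∧ (fun u => -x u) t = 0} = ∅ := by
      simpa [neg_eq_zero] using hz
    obtain ⟨δ', hδ', hform⟩ := key (-ξ₀) (by linarith) δ hδ (fun u => -x u) (fun u => -ξ u)
      hcx.neg hcξ.neg (by simp [h0]) (by simp [h0'])
      (fun t ht hxt => by
        have hx : x t ≠ 0 := fun h => hxt (by simp [h])
        obtain ⟨hd1, hd2⟩ := hode t ht hx
        refine ⟨hd1.neg, ?_⟩
        have := hd2.neg
        rw [show -Real.sign (-x t) = - -Real.sign (x t) by rw [Real.sign_neg]]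
        exact this )
      hz'
    refine ⟨δ', hδ', fun t ht => ?_⟩
    obtain ⟨hx, hξ⟩ := hform t ht
    simp only [neg_eq_iff_eq_neg] at hx hξ
    rw [hx, hξ, Real.sign_of_neg hneg]
    constructor <;> ring
  · obtain ⟨δ', hδ', hform⟩ := key ξ₀ hpos δ hδ x ξ hcx hcξ h0 h0' hode hz
    refine ⟨δ', hδ', fun t ht => ?_⟩
    obtain ⟨hx, hξ⟩ := hform t ht
    rw [hx, hξ, Real.sign_of_pos hpos]
    constructor <;> ring

theorem stmt16 (ξ₀ : ℝ) (hξ₀ : ξ₀ ≠ 0) (δ : ℝ) (hδ : 0 < δ)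
    (x₁ ξ₁ x₂ ξ₂ : ℝ → ℝ)
    (hcx₁ : ContinuousOn x₁ (Set.Ioo (-δ) δ)) (hcξ₁ : ContinuousOn ξ₁ (Set.Ioo (-δ) δ))
    (hcx₂ : ContinuousOn x₂ (Set.Ioo (-δ) δ)) (hcξ₂ : ContinuousOn ξ₂ (Set.Ioo (-δ) δ))
    (h01 : x₁ 0 = 0) (h02 : ξ₁ 0 = ξ₀) (h03 : x₂ 0 = 0) (h04 : ξ₂ 0 = ξ₀)
    (hode₁ : ∀ t ∈ Set.Ioo (-δ) δ, x₁ t ≠ 0 →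
      HasDerivAt x₁ (ξ₁ t) t ∧ HasDerivAt ξ₁ (-Real.sign (x₁ t)) t)
    (hode₂ : ∀ t ∈ Set.Ioo (-δ) δ, x₂ t ≠ 0 →
      HasDerivAt x₂ (ξ₂ t) t ∧ HasDerivAt ξ₂ (-Real.sign (x₂ t)) t)
    (hz₁ : interior {t | t ∈ Set.Ioo (-δ) δ ∧ x₁ t = 0} = ∅)
    (hz₂ : interior {t | t ∈ Set.Ioo (-δ) δ ∧ x₂ t = 0} = ∅) :
    ∃ δ' > 0, ∀ t ∈ Set.Ioo (-δ') δ', x₁ t = x₂ t ∧ ξ₁ t = ξ₂ t := by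
  obtain ⟨δa, hδa, hfa⟩ := key' ξ₀ hξ₀ δ hδ x₁ ξ₁ hcx₁ hcξ₁ h01 h02 hode₁ hz₁
  obtain ⟨δb, hδb, hfb⟩ := key' ξ₀ hξ₀ δ hδ x₂ ξ₂ hcx₂ hcξ₂ h03 h04 hode₂ hz₂
  refine ⟨min δa δb, lt_min hδa hδb, fun t ht => ?_⟩
  have hta : t ∈ Set.Ioo (-δa) δa :=
    ⟨lt_of_le_of_lt (neg_le_neg (min_le_left _ _)) ht.1,
     lt_of_lt_of_le ht.2 (min_le_left _ _)⟩
  have htb : t ∈ Set.Ioo (-δb) δb :=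
    ⟨lt_of_le_of_lt (neg_le_neg (min_le_right _ _)) ht.1,
     lt_of_lt_of_le ht.2 (min_le_right _ _)⟩
  obtain ⟨ha1, ha2⟩ := hfa t hta
  obtain ⟨hb1, hb2⟩ := hfb t htb
  exact ⟨ha1.trans hb1.symm, ha2.trans hb2.symm⟩
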